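/- arXiv:2510.07759 — 3 statements merged into one kernel-verified Lean document; each statement's English description precedes it below -/
import Mathlib

section
/- Let p ∈ ℝ^m with p_j > 0 for all j, let 0 < ε ≤ log(m+1)·‖B‖₁, and set δ = ε / (2·log(m+1)·‖B‖₁). Define x_{ij} = (B_i/p_j) · (v_{ij}/p_j)^{1/δ} / ( 1 + Σ_{j'=1}^m (v_{ij'}/p_{j'})^{1/δ} ) for i ∈ [n], j ∈ [m]. Then for every buyer i: Σ_{j=1}^m (v_{ij} − p_j) x_{ij} + B_i ≥ (1 − 2ε/‖B‖₁) · B_i · max{ 1, max_{j∈[m]} (v_{ij}/p_j) }. -/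
open scoped Classical

noncomputable section

/-- Extended valuation vector of buyer `i`: index `0` gets value `1` (the convention
`v_{i0} = 1`), index `j+1` gets `v i j`. -/
def extV {n m : ℕ} (v : Fin n → Fin m → ℝ) (i : Fin n) : Fin (m + 1) → ℝ :=
  Fin.cons 1 (v i)

/-- Extended log-price vector: index `0` gets `0` (the convention `μ₀ = 0`),
index `j+1` gets `μ j`. -/
def extMu {m : ℕ} (μ : Fin m → ℝ) : Fin (m + 1) → ℝ :=
  Fin.cons 0 μ

/-- The smoothed weight `exp((log v_{ij} − μ_j)/δ) = v_{ij}^{1/δ} · exp(−μ_j/δ)`,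
with the conventions `log 0 = −∞`, `exp (−∞) = 0` (via `0 ^ (1/δ) = 0` for `δ > 0`). -/
def wt {n m : ℕ} (v : Fin n → Fin m → ℝ) (δ : ℝ) (μ : Fin m → ℝ) (i : Fin n)
    (j : Fin (m + 1)) : ℝ :=
  extV v i j ^ (1 / δ) * Real.exp (-extMu μ j / δ)

/-- The smoothed objective `F_δ`. -/
def Fd {n m : ℕ} (B : Fin n → ℝ) (v : Fin n → Fin m → ℝ) (δ : ℝ) (μ : Fin m → ℝ) : ℝ :=
  (∑ j, Real.exp (μ j)) + δ * ∑ i, B i * Real.log (∑ j, wt v δ μ i j)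

/-- The gradient of the smoothed objective `F_δ`. -/
def gradFd {n m : ℕ} (B : Fin n → ℝ) (v : Fin n → Fin m → ℝ) (δ : ℝ) (μ : Fin m → ℝ)
    (j : Fin m) : ℝ :=
  Real.exp (μ j) - ∑ i, B i * (wt v δ μ i j.succ / ∑ j', wt v δ μ i j')

/-- The value `v_{ij} · exp(−μ_j)` (over extended indices), whose logarithm is
`log v_{ij} − μ_j` with the convention `log 0 = −∞`. -/
def valF {n m : ℕ} (v : Fin n → Fin m → ℝ) (μ : Fin m → ℝ) (i : Fin n) (j : Fin (m + 1)) : ℝ :=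
  extV v i j * Real.exp (-extMu μ j)

/-- `h_i(μ) = max_{j ∈ {0,…,m}} (log v_{ij} − μ_j)`, realized as the logarithm of the
(positive) maximum of the values `v_{ij} e^{−μ_j}`. -/
def hMax {n m : ℕ} (v : Fin n → Fin m → ℝ) (μ : Fin m → ℝ) (i : Fin n) : ℝ :=
  Real.log (Finset.univ.sup' Finset.univ_nonempty (valF v μ i))

/-- The nonsmooth objective `F`. -/
def Fobj {n m : ℕ} (B : Fin n → ℝ) (v : Fin n → Fin m → ℝ) (μ : Fin m → ℝ) : ℝ :=
  (∑ j, Real.exp (μ j)) + ∑ i, B i * hMax v μ i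

/-- The active index set `𝒥_i(μ) = {j ∈ {0,…,m} : log v_{ij} − μ_j = h_i(μ)}`. -/
def activeSet {n m : ℕ} (v : Fin n → Fin m → ℝ) (μ : Fin m → ℝ) (i : Fin n) :
    Finset (Fin (m + 1)) :=
  Finset.univ.filter fun j =>
    valF v μ i j = Finset.univ.sup' Finset.univ_nonempty (valF v μ i)

/-- The Euclidean norm on `ℝ^m`. -/
def enorm2 {m : ℕ} (x : Fin m → ℝ) : ℝ :=
  Real.sqrt (∑ j, x j ^ 2)

end

/-- near-optimality (B2) of the constructed allocation, quasi-linear case. -/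
theorem approx_allocation_near_optimal_quasilinear
    (n m : ℕ) (hn : 1 ≤ n) (hm : 1 ≤ m)
    (B : Fin n → ℝ) (hB : ∀ i, 0 < B i)
    (v : Fin n → Fin m → ℝ) (hv : ∀ i j, 0 ≤ v i j)
    (p : Fin m → ℝ) (hp : ∀ j, 0 < p j)
    (ε : ℝ) (hε : 0 < ε) (hε' : ε ≤ Real.log (m + 1) * ∑ i, B i)
    (δ : ℝ) (hδ : δ = ε / (2 * Real.log (m + 1) * ∑ i, B i))
    (x : Fin n → Fin m → ℝ)
    (hx : ∀ i j, x i j =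
      B i / p j * ((v i j / p j) ^ (1 / δ) / (1 + ∑ j', (v i j' / p j') ^ (1 / δ)))) :
    ∀ i, (1 - 2 * ε / ∑ i', B i') *
        (B i * max 1
          (Finset.univ.sup' ⟨⟨0, hm⟩, Finset.mem_univ _⟩ (fun j => v i j / p j))) ≤
      (∑ j, (v i j - p j) * x i j) + B i := by
 
  intro i
  have hTBpos : (0:ℝ) < ∑ i', B i' :=
    Finset.sum_pos (fun i _ => hB i) ⟨⟨0, hn⟩, Finset.mem_univ _⟩
  have hm1pos : (0:ℝ) < (m:ℝ) + 1 := by positivity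
  have hL : 0 < Real.log ((m:ℝ) + 1) := by
    apply Real.log_pos
    have h1 : (1:ℝ) ≤ (m:ℝ) := by exact_mod_cast hm
    linarith
  have hδpos : 0 < δ := by rw [hδ]; positivity
  have hδL : δ * Real.log ((m:ℝ) + 1) = ε / (2 * ∑ i', B i') := by
    rw [hδ]; field_simp
  have hq : ∀ j, (0:ℝ) ≤ v i j / p j := fun j => div_nonneg (hv i j) (hp j).le
  have hxi : ∀ j, x i j = B i / p j *
      ((v i j / p j) ^ (1 / δ) / (1 + ∑ j', (v i j' / p j') ^ (1 / δ))) := hx i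
  set S : ℝ := 1 + ∑ j', (v i j' / p j') ^ (1 / δ) with hSdef
  have hSpos : 0 < S := by
    have h : (0:ℝ) ≤ ∑ j', (v i j' / p j') ^ (1 / δ) :=
      Finset.sum_nonneg fun j _ => Real.rpow_nonneg (hq j) _
    rw [hSdef]; linarith
  set A : ℝ := 1 + ∑ j', (v i j' / p j') ^ (1 / δ + 1) with hAdef
  have hApos : 0 < A := by
    have h : (0:ℝ) ≤ ∑ j', (v i j' / p j') ^ (1 / δ + 1) :=
      Finset.sum_nonneg fun j _ => Real.rpow_nonneg (hq j) _
    rw [hAdef]; linarith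
  -- the identity: total quasi-linear utility = B i * (A / S)
  have hterm : ∀ j, (v i j - p j) * x i j
      = B i * (v i j / p j) ^ (1 / δ + 1) / S - B i * (v i j / p j) ^ (1 / δ) / S := by
    intro j
    have hrpow : (v i j / p j) ^ (1 / δ + 1)
        = (v i j / p j) ^ (1 / δ) * (v i j / p j) := by
      rw [Real.rpow_add' (hq j) (by positivity), Real.rpow_one]
    rw [hxi j, hrpow]
    have hpj : p j ≠ 0 := (hp j).ne'
    have hS0 : S ≠ 0 := hSpos.ne'
    field_simp
  have hid : (∑ j, (v i j - p j) * x i j) + B i = B i * (A / S) := by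
    have h1 : ∑ j, (v i j - p j) * x i j
        = (B i * ∑ j, (v i j / p j) ^ (1 / δ + 1)) / S
          - (B i * ∑ j, (v i j / p j) ^ (1 / δ)) / S := by
      rw [Finset.mul_sum, Finset.mul_sum, Finset.sum_div, Finset.sum_div,
        ← Finset.sum_sub_distrib]
      exact Finset.sum_congr rfl fun j _ => hterm j
    have hSa : ∑ j, (v i j / p j) ^ (1 / δ + 1) = A - 1 := by rw [hAdef]; ring
    have hSb : ∑ j, (v i j / p j) ^ (1 / δ) = S - 1 := by rw [hSdef]; ring
    rw [h1, hSa, hSb]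
    field_simp
    ring
  -- extended vector
  set Q : Fin (m + 1) → ℝ := Fin.cons 1 (fun j => v i j / p j) with hQdef
  have hQ0 : ∀ j, 0 ≤ Q j := by
    intro j
    refine Fin.cases ?_ ?_ j
    · simp [hQdef]
    · intro k; simpa [hQdef] using hq k
  have hSQ : S = ∑ j, Q j ^ (1 / δ) := by
    rw [Fin.sum_univ_succ]
    simp [hQdef, hSdef]
  have hAQ : A = ∑ j, Q j ^ (1 / δ + 1) := by
    rw [Fin.sum_univ_succ]
    simp [hQdef, hAdef]
  set M : ℝ := max 1
    (Finset.univ.sup' ⟨⟨0, hm⟩, Finset.mem_univ _⟩ fun j => v i j / p j) with hMdef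
  have hM1 : (1:ℝ) ≤ M := le_max_left _ _
  have hM0 : (0:ℝ) ≤ M := le_trans zero_le_one hM1
  have hMQ : ∃ j0, M = Q j0 := by
    obtain ⟨j1, -, hj1⟩ := Finset.exists_mem_eq_sup'
      (⟨⟨0, hm⟩, Finset.mem_univ _⟩ : (Finset.univ : Finset (Fin m)).Nonempty)
      (fun j => v i j / p j)
    rcases le_total (v i j1 / p j1) 1 with h | h
    · refine ⟨0, ?_⟩
      rw [hMdef, hj1, max_eq_left h]
      simp [hQdef]
    · refine ⟨j1.succ, ?_⟩
      rw [hMdef, hj1, max_eq_right h]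
      simp [hQdef]
  have hMS : M ^ (1 / δ) ≤ S := by
    obtain ⟨j0, hj0⟩ := hMQ
    rw [hSQ, hj0]
    exact Finset.single_le_sum (fun j _ => Real.rpow_nonneg (hQ0 j) _) (Finset.mem_univ j0)
  have hMSδ : M ≤ S ^ δ := by
    have h1 : (M ^ (1 / δ)) ^ δ ≤ S ^ δ :=
      Real.rpow_le_rpow (Real.rpow_nonneg hM0 _) hMS hδpos.le
    calc M = (M ^ (1 / δ)) ^ δ := by
          rw [← Real.rpow_mul hM0, one_div_mul_cancel hδpos.ne', Real.rpow_one]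
      _ ≤ S ^ δ := h1
  -- power-mean inequality
  have hwsum : ∑ _j : Fin (m + 1), 1 / ((m:ℝ) + 1) = 1 := by
    rw [Finset.sum_const, Finset.card_univ, Fintype.card_fin, nsmul_eq_mul]
    push_cast
    field_simp
  have hpm := Real.rpow_arith_mean_le_arith_mean_rpow Finset.univ
    (fun _ : Fin (m + 1) => 1 / ((m:ℝ) + 1)) (fun j => Q j ^ (1 / δ))
    (fun j _ => by positivity) hwsum
    (fun j _ => Real.rpow_nonneg (hQ0 j) _) (p := 1 + δ) (by linarith)
  have hz : ∀ j : Fin (m + 1), (Q j ^ (1 / δ)) ^ ((1:ℝ) + δ) = Q j ^ (1 / δ + 1) := by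
    intro j
    rw [← Real.rpow_mul (hQ0 j)]
    congr 1
    field_simp
  have hsum1 : ∑ j : Fin (m + 1), 1 / ((m:ℝ) + 1) * Q j ^ (1 / δ) = S / ((m:ℝ) + 1) := by
    rw [← Finset.mul_sum, ← hSQ]; ring
  have hsum2 : ∑ j : Fin (m + 1), 1 / ((m:ℝ) + 1) * (Q j ^ (1 / δ)) ^ ((1:ℝ) + δ)
      = A / ((m:ℝ) + 1) := by
    simp only [hz]
    rw [← Finset.mul_sum, ← hAQ]; ring
  rw [hsum1, hsum2] at hpm
  have hdiv : (S / ((m:ℝ) + 1)) ^ ((1:ℝ) + δ)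
      = S ^ ((1:ℝ) + δ) / ((m:ℝ) + 1) ^ ((1:ℝ) + δ) :=
    Real.div_rpow hSpos.le hm1pos.le _
  have key1 : S ^ ((1:ℝ) + δ) * ((m:ℝ) + 1) ^ (-δ) ≤ A := by
    have e1 : ((m:ℝ) + 1) * (S ^ ((1:ℝ) + δ) / ((m:ℝ) + 1) ^ ((1:ℝ) + δ))
        = S ^ ((1:ℝ) + δ) * ((m:ℝ) + 1) ^ (-δ) := by
      rw [show (-δ) = 1 - (1 + δ) by ring, Real.rpow_sub hm1pos, Real.rpow_one]
      ring
    calc S ^ ((1:ℝ) + δ) * ((m:ℝ) + 1) ^ (-δ)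
        = ((m:ℝ) + 1) * ((S / ((m:ℝ) + 1)) ^ ((1:ℝ) + δ)) := by rw [hdiv, e1]
      _ ≤ ((m:ℝ) + 1) * (A / ((m:ℝ) + 1)) := mul_le_mul_of_nonneg_left hpm hm1pos.le
      _ = A := by field_simp
  have hSsplit : S ^ ((1:ℝ) + δ) = S * S ^ δ := by
    rw [Real.rpow_add hSpos, Real.rpow_one]
  have hexp : 1 - δ * Real.log ((m:ℝ) + 1) ≤ ((m:ℝ) + 1) ^ (-δ) := by
    rw [Real.rpow_def_of_pos hm1pos]
    calc 1 - δ * Real.log ((m:ℝ) + 1) = Real.log ((m:ℝ) + 1) * (-δ) + 1 := by ring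
      _ ≤ Real.exp (Real.log ((m:ℝ) + 1) * (-δ)) := Real.add_one_le_exp _
  have hc : 1 - 2 * ε / (∑ i', B i') ≤ 1 - δ * Real.log ((m:ℝ) + 1) := by
    rw [hδL]
    have h2 : ε / (2 * ∑ i', B i') ≤ 2 * ε / (∑ i', B i') := by
      rw [div_le_div_iff₀ (by positivity) hTBpos]
      nlinarith
    linarith
  have hfin : (1 - 2 * ε / ∑ i', B i') * M * S ≤ A := by
    rcases le_or_gt 0 (1 - δ * Real.log ((m:ℝ) + 1)) with hD | hD
    · have h2 : M * (1 - δ * Real.log ((m:ℝ) + 1)) ≤ S ^ δ * (((m:ℝ) + 1) ^ (-δ)) :=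
        mul_le_mul hMSδ hexp hD (Real.rpow_nonneg hSpos.le δ)
      calc (1 - 2 * ε / ∑ i', B i') * M * S
          ≤ (1 - δ * Real.log ((m:ℝ) + 1)) * M * S := by
            have := mul_le_mul_of_nonneg_right (mul_le_mul_of_nonneg_right hc hM0) hSpos.le
            linarith
        _ = (M * (1 - δ * Real.log ((m:ℝ) + 1))) * S := by ring
        _ ≤ (S ^ δ * (((m:ℝ) + 1) ^ (-δ))) * S :=
            mul_le_mul_of_nonneg_right h2 hSpos.le
        _ = S ^ ((1:ℝ) + δ) * ((m:ℝ) + 1) ^ (-δ) := by rw [hSsplit]; ring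
        _ ≤ A := key1
    · have h3 : 1 - 2 * ε / (∑ i', B i') < 0 := lt_of_le_of_lt hc hD
      have h4 : 0 < M * S := mul_pos (lt_of_lt_of_le zero_lt_one hM1) hSpos
      have h6 : (1 - 2 * ε / ∑ i', B i') * (M * S) ≤ 0 :=
        mul_nonpos_of_nonpos_of_nonneg h3.le h4.le
      calc (1 - 2 * ε / ∑ i', B i') * M * S
          = (1 - 2 * ε / ∑ i', B i') * (M * S) := by ring
        _ ≤ 0 := h6
        _ ≤ A := hApos.le
  have h5 : (1 - 2 * ε / ∑ i', B i') * M ≤ A / S := (le_div_iff₀ hSpos).mpr hfin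
  calc (1 - 2 * ε / ∑ i', B i') * (B i * M) = B i * ((1 - 2 * ε / ∑ i', B i') * M) := by
        ring
    _ ≤ B i * (A / S) := mul_le_mul_of_nonneg_left h5 (hB i).le
    _ = (∑ j, (v i j - p j) * x i j) + B i := hid.symm
end

section
/- Let μ ∈ ℝ^m and suppose λ ∈ ℝ^{n×(m+1)} (indexed by i ∈ [n], j ∈ {0,1,…,m}) satisfies: λ_{ij} ≥ 0 for all i, j; Σ_{j∈{0,1,…,m}} λ_{ij} = B_i for all i; Σ_{i=1}^n λ_{ij} = exp(μ_j) for all j ∈ [m]; and λ_{ij} = 0 whenever j ∉ 𝒥_i(μ). Define p_j = exp(μ_j) and x_{ij} = λ_{ij}/p_j for i ∈ [n], j ∈ [m]. Then (p, x) is a competitive equilibrium for the quasi-linear utilities u_i(y) = Σ_{j=1}^m (v_{ij} − p_j)y_j: (E1) Σ_{j=1}^m p_j x_{ij} ≤ B_i for all i; (E2) for each i, x_i maximizes Σ_{j=1}^m (v_{ij} − p_j)y_j over {y ∈ ℝ^m : y_j ≥ 0, Σ_{j=1}^m p_j y_j ≤ B_i}; (E3) Σ_{i=1}^n x_{ij}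 = 1 for all j. -/
open scoped Classical

/-- a solution of the recovery linear system at prices `p_j = exp(μ_j)`
yields a competitive equilibrium for the quasi-linear utilities. -/
theorem recovery_system_gives_ce_quasilinear
    (n m : ℕ) (hn : 1 ≤ n) (hm : 1 ≤ m)
    (B : Fin n → ℝ) (hB : ∀ i, 0 < B i)
    (v : Fin n → Fin m → ℝ) (hv : ∀ i j, 0 ≤ v i j)
    (μ : Fin m → ℝ)
    (lam : Fin n → Fin (m + 1) → ℝ)
    (hlam0 : ∀ i j, 0 ≤ lam i j)
    (hlam1 : ∀ i, ∑ j, lam i j = B i)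
    (hlam2 : ∀ j : Fin m, ∑ i, lam i j.succ = Real.exp (μ j))
    (hlam3 : ∀ i, ∀ j ∉ activeSet v μ i, lam i j = 0)
    (p : Fin m → ℝ) (hp : ∀ j, p j = Real.exp (μ j))
    (x : Fin n → Fin m → ℝ) (hx : ∀ i j, x i j = lam i j.succ / p j) :
    (∀ i, ∑ j, p j * x i j ≤ B i) ∧
      (∀ i, ∀ y : Fin m → ℝ, (∀ j, 0 ≤ y j) → (∑ j, p j * y j) ≤ B i →
        ∑ j, (v i j - p j) * y j ≤ ∑ j, (v i j - p j) * x i j) ∧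
      ∀ j, ∑ i, x i j = 1 := by
  have hpp : ∀ j, 0 < p j := fun j => (hp j) ▸ Real.exp_pos _
  have hpx : ∀ i j, p j * x i j = lam i j.succ := by
    intro i j; rw [hx, mul_div_cancel₀ _ (hpp j).ne']
  have hsum : ∀ i, ∑ j, p j * x i j = B i - lam i 0 := by
    intro i
    have h1 := hlam1 i
    rw [Fin.sum_univ_succ] at h1
    simp only [hpx]; linarith
  refine ⟨?_, ?_, ?_⟩
  · intro i; rw [hsum i]; linarith [hlam0 i 0]
  · intro i y hy hby
    set M := Finset.univ.sup' Finset.univ_nonempty (valF v μ i) with hM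
    have hval0 : valF v μ i 0 = 1 := by simp [valF, extV, extMu]
    have hM1 : 1 ≤ M := hval0 ▸ Finset.le_sup' _ (Finset.mem_univ 0)
    have hMle : ∀ j : Fin m, valF v μ i j.succ ≤ M := fun j =>
      Finset.le_sup' _ (Finset.mem_univ _)
    have hvp : ∀ j : Fin m, v i j - p j = p j * (valF v μ i j.succ - 1) := by
      intro j
      simp only [valF, extV, extMu, Fin.cons_succ, hp, mul_sub, mul_one, mul_comm,
        ← Real.exp_add]
      rw [mul_comm, mul_assoc, ← Real.exp_add]
      simp
    have hy' : ∑ j, (v i j - p j) * y j ≤ (M - 1) * B i := by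
      calc ∑ j, (v i j - p j) * y j ≤ ∑ j, (M - 1) * (p j * y j) := by
            apply Finset.sum_le_sum
            intro j _
            rw [hvp j]
            have h2 := mul_nonneg (le_of_lt (hpp j)) (hy j)
            nlinarith [hMle j, hpp j, hy j]
          _ = (M - 1) * ∑ j, p j * y j := by rw [Finset.mul_sum]
          _ ≤ (M - 1) * B i := by nlinarith
    have hx' : ∑ j, (v i j - p j) * x i j = (M - 1) * (B i - lam i 0) := by
      have hterm : ∀ j : Fin m, (v i j - p j) * x i j = (M - 1) * lam i j.succ := by
        intro j
        by_cases h : j.succ ∈ activeSet v μ i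
        · have hval : valF v μ i j.succ = M := by
            simpa [activeSet] using h
          have hne := (hpp j).ne'
          rw [hvp j, hx, hval]
          field_simp
        · rw [hx, hlam3 i _ h]
          simp
      rw [Finset.sum_congr rfl fun j _ => hterm j, ← Finset.mul_sum]
      have h1 := hlam1 i
      rw [Fin.sum_univ_succ] at h1
      have : ∑ j : Fin m, lam i j.succ = B i - lam i 0 := by linarith
      rw [this]
    have hzero : (M - 1) * lam i 0 = 0 := by
      by_cases h : lam i 0 = 0
      · simp [h]
      · have hmem : (0 : Fin (m + 1)) ∈ activeSet v μ i := by
          by_contra hc; exact h (hlam3 i 0 hc)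
        have hv0 : valF v μ i 0 = M := by simpa [activeSet] using hmem
        rw [hval0] at hv0
        rw [← hv0]; ring
    rw [hx']
    nlinarith
  · intro j
    have : ∑ i, x i j = (∑ i, lam i j.succ) / p j := by
      rw [Finset.sum_div]
      exact Finset.sum_congr rfl fun i _ => hx i j
    rw [this, hlam2 j, hp j, div_self (Real.exp_pos _).ne']
end

section
/- Let μ̲ ≤ μ̄ be reals, η ≥ 0, ε > 0, assume log(m+1)·‖B‖₁ > 0, and set δ = ε / (2·log(m+1)·‖B‖₁). Let μ* be a global minimizer of F over ℝ^m with μ̲ ≤ μ*_j ≤ μ̄ for all j, and let F_δ* = inf{ F_δ(ν) : ν ∈ ℝ^m, μ̲ − η ≤ ν_j ≤ μ̄ + η for all j }. If μ̂ ∈ ℝ^m satisfies F_δ(μ̂) − F_δ* ≤ ε/2, then F(μ̂) − F(μ*) ≤ ε. -/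
open scoped Classical

noncomputable section

lemma extV_nonneg {n m : ℕ} (v : Fin n → Fin m → ℝ) (hv : ∀ i j, 0 ≤ v i j)
    (i : Fin n) (j : Fin (m + 1)) : 0 ≤ extV v i j := by
  refine Fin.cases ?_ ?_ j
  · simp [extV]
  · intro k; simpa [extV] using hv i k

lemma valF_nonneg {n m : ℕ} (v : Fin n → Fin m → ℝ) (hv : ∀ i j, 0 ≤ v i j)
    (μ : Fin m → ℝ) (i : Fin n) (j : Fin (m + 1)) : 0 ≤ valF v μ i j :=
  mul_nonneg (extV_nonneg v hv i j) (Real.exp_nonneg _)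

lemma wt_eq {n m : ℕ} (v : Fin n → Fin m → ℝ) (hv : ∀ i j, 0 ≤ v i j)
    {δ : ℝ} (hδ : 0 < δ) (μ : Fin m → ℝ) (i : Fin n) (j : Fin (m + 1)) :
    wt v δ μ i j = valF v μ i j ^ (1 / δ) := by
  unfold wt valF
  rw [Real.mul_rpow (extV_nonneg v hv i j) (Real.exp_nonneg _)]
  congr 1
  rw [Real.rpow_def_of_pos (Real.exp_pos _), Real.log_exp, ← div_eq_mul_one_div]

lemma log_sum_wt_bounds {n m : ℕ} (v : Fin n → Fin m → ℝ) (hv : ∀ i j, 0 ≤ v i j)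
    {δ : ℝ} (hδ : 0 < δ) (μ : Fin m → ℝ) (i : Fin n) :
    hMax v μ i ≤ δ * Real.log (∑ j, wt v δ μ i j) ∧
    δ * Real.log (∑ j, wt v δ μ i j) ≤ hMax v μ i + δ * Real.log (m + 1) := by
  set M := Finset.univ.sup' Finset.univ_nonempty (valF v μ i) with hM
  have hM1 : (1:ℝ) ≤ M := by
    have h0 : valF v μ i 0 = 1 := by simp [valF, extV, extMu]
    calc (1:ℝ) = valF v μ i 0 := h0.symm
      _ ≤ M := Finset.le_sup' _ (Finset.mem_univ _)
  have hMpos : (0:ℝ) < M := lt_of_lt_of_le one_pos hM1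
  obtain ⟨j₀, -, hj₀⟩ := Finset.exists_mem_eq_sup' (Finset.univ_nonempty (α := Fin (m+1))) (valF v μ i)
  have hwt : ∀ j, wt v δ μ i j = valF v μ i j ^ (1 / δ) := wt_eq v hv hδ μ i
  have hlow : M ^ (1/δ) ≤ ∑ j, wt v δ μ i j := by
    rw [hM, hj₀]
    calc valF v μ i j₀ ^ (1/δ) = wt v δ μ i j₀ := (hwt j₀).symm
      _ ≤ _ := Finset.single_le_sum (f := wt v δ μ i)
          (fun j _ => by rw [hwt]; exact Real.rpow_nonneg (valF_nonneg v hv μ i j) _)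
          (Finset.mem_univ j₀)
  have hupp : ∑ j, wt v δ μ i j ≤ (m+1 : ℝ) * M ^ (1/δ) := by
    calc ∑ j, wt v δ μ i j ≤ ∑ _j : Fin (m+1), M ^ (1/δ) := by
          refine Finset.sum_le_sum fun j _ => ?_
          rw [hwt]
          exact Real.rpow_le_rpow (valF_nonneg v hv μ i j)
            (Finset.le_sup' _ (Finset.mem_univ j)) (by positivity)
      _ = (m+1 : ℝ) * M ^ (1/δ) := by
          simp [Finset.sum_const, Finset.card_univ, nsmul_eq_mul]
  have hMr : (0:ℝ) < M ^ (1/δ) := Real.rpow_pos_of_pos hMpos _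
  have hSpos : 0 < ∑ j, wt v δ μ i j := lt_of_lt_of_le hMr hlow
  have hlogM : Real.log (M ^ (1/δ)) = (1/δ) * Real.log M := Real.log_rpow hMpos _
  have hMax_eq : hMax v μ i = Real.log M := rfl
  constructor
  · have h := Real.log_le_log hMr hlow
    rw [hlogM] at h
    have h2 := mul_le_mul_of_nonneg_left h hδ.le
    rw [hMax_eq]
    calc Real.log M = δ * ((1/δ) * Real.log M) := by field_simp
      _ ≤ _ := h2
  · have h := Real.log_le_log hSpos hupp
    have hmul : Real.log ((m+1 : ℝ) * M ^ (1/δ)) = Real.log (m+1 : ℝ) + (1/δ) * Real.log M := by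
      rw [Real.log_mul (by positivity) hMr.ne', hlogM]
    rw [hmul] at h
    have h2 := mul_le_mul_of_nonneg_left h hδ.le
    rw [hMax_eq]
    calc δ * Real.log (∑ j, wt v δ μ i j)
        ≤ δ * (Real.log (m+1:ℝ) + (1/δ) * Real.log M) := h2
      _ = Real.log M + δ * Real.log (m+1:ℝ) := by field_simp; ring
      _ = _ := by push_cast; ring

lemma Fd_bounds {n m : ℕ} (B : Fin n → ℝ) (hB : ∀ i, 0 ≤ B i)
    (v : Fin n → Fin m → ℝ) (hv : ∀ i j, 0 ≤ v i j)
    {δ : ℝ} (hδ : 0 < δ) (μ : Fin m → ℝ) :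
    Fobj B v μ ≤ Fd B v δ μ ∧
    Fd B v δ μ ≤ Fobj B v μ + δ * Real.log (m + 1) * ∑ i, B i := by
  have key := fun i => log_sum_wt_bounds v hv hδ μ i
  unfold Fobj Fd
  constructor
  · have h : ∑ i, B i * hMax v μ i ≤ ∑ i, δ * (B i * Real.log (∑ j, wt v δ μ i j)) := by
      refine Finset.sum_le_sum fun i _ => ?_
      have h1 := mul_le_mul_of_nonneg_left (key i).1 (hB i)
      nlinarith [h1]
    rw [← Finset.mul_sum] at h
    linarith
  · have h : ∑ i, δ * (B i * Real.log (∑ j, wt v δ μ i j))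
        ≤ ∑ i, (B i * hMax v μ i + δ * Real.log (m+1:ℝ) * B i) := by
      refine Finset.sum_le_sum fun i _ => ?_
      have h1 := mul_le_mul_of_nonneg_left (key i).2 (hB i)
      nlinarith [h1]
    rw [← Finset.mul_sum] at h
    rw [Finset.sum_add_distrib, ← Finset.mul_sum] at h
    push_cast at h ⊢
    linarith
end

/-- validity of the stopping criterion: an `ε/2`-approximate minimizer of
the box-constrained smoothed problem is an `ε`-approximate minimizer of `F`. -/
theorem stopping_criterion_valid
    (n m : ℕ) (hn : 1 ≤ n) (hm : 1 ≤ m)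
    (B : Fin n → ℝ) (hB : ∀ i, 0 < B i)
    (v : Fin n → Fin m → ℝ) (hv : ∀ i j, 0 ≤ v i j)
    (lo hi : ℝ) (hlohi : lo ≤ hi) (η : ℝ) (hη : 0 ≤ η)
    (ε : ℝ) (hε : 0 < ε)
    (hpos : 0 < Real.log (m + 1) * ∑ i, B i)
    (δ : ℝ) (hδ : δ = ε / (2 * Real.log (m + 1) * ∑ i, B i))
    (μs : Fin m → ℝ) (hμs : ∀ ν : Fin m → ℝ, Fobj B v μs ≤ Fobj B v ν)
    (hbox : ∀ j, lo ≤ μs j ∧ μs j ≤ hi)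
    (μh : Fin m → ℝ)
    (hμh : Fd B v δ μh -
      sInf { t : ℝ | ∃ ν : Fin m → ℝ,
        (∀ j, lo - η ≤ ν j ∧ ν j ≤ hi + η) ∧ t = Fd B v δ ν } ≤ ε / 2) :
    Fobj B v μh - Fobj B v μs ≤ ε := by
  have h2pos : 0 < 2 * Real.log (m + 1) * ∑ i, B i := by rw [mul_assoc]; linarith
  have hδpos : 0 < δ := hδ ▸ div_pos hε h2pos
  have hB' : ∀ i, 0 ≤ B i := fun i => (hB i).le
  have hbd := fun μ => Fd_bounds B hB' v hv hδpos μ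
  have hδε : δ * Real.log (m + 1) * ∑ i, B i = ε / 2 := by
    rw [hδ, div_mul_eq_mul_div, div_mul_eq_mul_div, div_eq_iff h2pos.ne']; ring
  set Sset := { t : ℝ | ∃ ν : Fin m → ℝ,
      (∀ j, lo - η ≤ ν j ∧ ν j ≤ hi + η) ∧ t = Fd B v δ ν } with hS
  have hmem : Fd B v δ μs ∈ Sset :=
    ⟨μs, fun j => ⟨by linarith [(hbox j).1], by linarith [(hbox j).2]⟩, rfl⟩
  have hbdd : BddBelow Sset := ⟨Fobj B v μs, by
    rintro t ⟨ν, -, rfl⟩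
    exact le_trans (hμs ν) (hbd ν).1⟩
  have hInf : sInf Sset ≤ Fd B v δ μs := csInf_le hbdd hmem
  have h1 := (hbd μh).1
  have h2 := (hbd μs).2
  linarith
end
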